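/- The Dirichlet kernels are uniformly bounded in the Alexiewicz norm: for every integer n ≥ 0, the Dirichlet kernel D_n(t) = Σ_{k=−n}^{n} e^{ikt} satisfies ‖D_n‖_T ≤ 4π, i.e. sup{ |∫_α^β D_n(t) dt| : α, β ∈ ℝ, α ≤ β ≤ α + 2π } ≤ 4π. -/

import Mathlib

/-!
Let `F x = x + 2 ∑ sin (k x) / k` be the primitive of `D_n`, so that `∫_α^β D_n = F β - F α`.
The function `F x - x` is odd and `2π`-periodic, and `0 ≤ F ≤ 2π` on `[0, π]`:
for `x (n + 1/2) ≤ 2` every term `sin (k x) / k` lies in `[0, x]`, and otherwise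
`F x = π - ∫_x^π D_n`, where integrating `sin ((n + 1/2) t) / sin (t / 2)` by parts against the
decreasing factor `1 / sin (t / 2)` bounds the integral by `2 / ((n + 1/2) sin (x / 2)) ≤ π`.
Reflecting and translating, `F` maps `[2πj, 2π(j+1))` into `[2πj, 2π(j+1)]`, and an interval of
length at most `2π` meets at most two consecutive such windows.
-/

open MeasureTheory Real Finset

noncomputable section

def dirichletKernel (n : ℕ) (t : ℝ) : ℝ :=
  1 + 2 * ∑ k ∈ range n, cos (((k : ℝ) + 1) * t)

def dirichletPrimitive (n : ℕ) (x : ℝ) : ℝ :=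
  x + 2 * ∑ k ∈ range n, sin (((k : ℝ) + 1) * x) / ((k : ℝ) + 1)

end

theorem sum_Icc_exp_eq_dirichletKernel (n : ℕ) (t : ℝ) :
    ∑ k ∈ Icc (-(n : ℤ)) n, Complex.exp (Complex.I * k * t) = dirichletKernel n t := by
  induction n with
  | zero => simp [dirichletKernel]
  | succ n ih =>
    have hIcc : Icc (-((n + 1 : ℕ) : ℤ)) ((n + 1 : ℕ) : ℤ)
        = insert (-((n + 1 : ℕ) : ℤ)) (insert ((n + 1 : ℕ) : ℤ) (Icc (-(n : ℤ)) n)) := by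
      ext k; simp only [mem_insert, Finset.mem_Icc]; omega
    rw [hIcc, sum_insert (by simp; omega), sum_insert (by simp), ih, dirichletKernel,
      dirichletKernel, sum_range_succ]
    push_cast
    have hcos : Complex.exp (Complex.I * -(n + 1) * t) + Complex.exp (Complex.I * (n + 1) * t)
        = 2 * Complex.cos ((n + 1) * t) := by
      rw [Complex.two_cos]; ring_nf
    linear_combination hcos

theorem dirichletKernel_mul_sin_half (n : ℕ) (t : ℝ) :
    dirichletKernel n t * sin (t / 2) = sin ((n + 1 / 2) * t) := by
  induction n with
  | zero => simp [dirichletKernel]; ring_nf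
  | succ n ih =>
    rw [dirichletKernel, sum_range_succ] at *
    rw [show ((n : ℝ) + 1 / 2) * t = (n + 1) * t - t / 2 by ring, sin_sub] at ih
    rw [show ((n + 1 : ℕ) + 1 / 2 : ℝ) * t = (n + 1) * t + t / 2 by push_cast; ring, sin_add]
    linear_combination ih

theorem hasDerivAt_dirichletPrimitive (n : ℕ) (x : ℝ) :
    HasDerivAt (dirichletPrimitive n) (dirichletKernel n x) x := by
  have hterm (k : ℕ) : HasDerivAt (fun x => sin (((k : ℝ) + 1) * x) / ((k : ℝ) + 1))
      (cos (((k : ℝ) + 1) * x)) x := by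
    refine ((((hasDerivAt_id' x).const_mul ((k : ℝ) + 1)).sin).div_const
      ((k : ℝ) + 1)).congr_deriv ?_
    field_simp
  exact (hasDerivAt_id' x).add ((HasDerivAt.fun_sum fun k _ => hterm k).const_mul 2)

theorem integral_dirichletKernel (n : ℕ) (a b : ℝ) :
    ∫ t in a..b, dirichletKernel n t = dirichletPrimitive n b - dirichletPrimitive n a :=
  intervalIntegral.integral_eq_sub_of_hasDerivAt (fun x _ => hasDerivAt_dirichletPrimitive n x)
    ((by unfold dirichletKernel; fun_prop : Continuous (dirichletKernel n)).intervalIntegrable a b)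

theorem dirichletPrimitive_neg (n : ℕ) (x : ℝ) :
    dirichletPrimitive n (-x) = -dirichletPrimitive n x := by
  simp only [dirichletPrimitive, mul_neg, sin_neg, neg_div, sum_neg_distrib]
  ring

theorem periodic_dirichletPrimitive_sub_id (n : ℕ) :
    Function.Periodic (fun x => dirichletPrimitive n x - x) (2 * π) := by
  intro x
  have hsin (k : ℕ) : sin (((k : ℝ) + 1) * (x + 2 * π)) = sin (((k : ℝ) + 1) * x) := by
    rw [mul_add, show (k : ℝ) + 1 = (k + 1 : ℕ) by push_cast; ring, sin_add_nat_mul_two_pi]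
  simp only [dirichletPrimitive, hsin]
  ring

theorem dirichletPrimitive_pi (n : ℕ) : dirichletPrimitive n π = π := by
  have hsin (k : ℕ) : sin (((k : ℝ) + 1) * π) = 0 := mod_cast sin_nat_mul_pi (k + 1)
  simp [dirichletPrimitive, hsin]

theorem abs_integral_mul_le_of_deriv_nonpos {u u' G g : ℝ → ℝ} {a b M : ℝ} (hab : a ≤ b)
    (hu : ∀ t ∈ Set.Icc a b, HasDerivAt u (u' t) t) (hu'_nonpos : ∀ t ∈ Set.Icc a b, u' t ≤ 0)
    (hu' : IntervalIntegrable u' volume a b) (hG : ∀ t ∈ Set.Icc a b, HasDerivAt G (g t) t)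
    (hg : IntervalIntegrable g volume a b) (hGM : ∀ t ∈ Set.Icc a b, |G t| ≤ M)
    (hub : 0 ≤ u b) :
    |∫ t in a..b, u t * g t| ≤ 2 * M * u a := by
  rw [← Set.uIcc_of_le hab] at hu hG
  have hM : 0 ≤ M := (abs_nonneg _).trans (hGM b ⟨hab, le_rfl⟩)
  have hFTC : ∫ t in a..b, u' t = u b - u a :=
    intervalIntegral.integral_eq_sub_of_hasDerivAt hu hu'
  have hua : u b ≤ u a := by
    have := intervalIntegral.integral_nonneg (f := fun t => -u' t) (μ := volume) hab
      fun t ht => neg_nonneg.2 (hu'_nonpos t ht)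
    rw [intervalIntegral.integral_neg, hFTC] at this
    linarith
  have hrest : |∫ t in a..b, u' t * G t| ≤ M * (u a - u b) := by
    calc |∫ t in a..b, u' t * G t| ≤ ∫ t in a..b, -M * u' t := by
          refine intervalIntegral.norm_integral_le_of_norm_le (f := fun t => u' t * G t) hab
            (ae_of_all _ fun t ht => ?_) (hu'.const_mul _)
          have ht : t ∈ Set.Icc a b := Set.Ioc_subset_Icc_self ht
          rw [norm_mul, Real.norm_eq_abs, Real.norm_eq_abs, abs_of_nonpos (hu'_nonpos t ht)]
          nlinarith [hGM t ht, hu'_nonpos t ht]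
      _ = M * (u a - u b) := by rw [intervalIntegral.integral_const_mul, hFTC]; ring
  have hbdry (t : ℝ) (ht : t ∈ Set.Icc a b) (hut : 0 ≤ u t) : |u t * G t| ≤ u t * M := by
    rw [abs_mul, abs_of_nonneg hut]
    exact mul_le_mul_of_nonneg_left (hGM t ht) hut
  rw [intervalIntegral.integral_mul_deriv_eq_deriv_mul hu hG hu' hg]
  calc |u b * G b - u a * G a - ∫ t in a..b, u' t * G t|
      ≤ |u b * G b| + |u a * G a| + |∫ t in a..b, u' t * G t| :=
        (abs_sub _ _).trans (add_le_add_left (abs_sub _ _) _)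
    _ ≤ u b * M + u a * M + M * (u a - u b) := by
      gcongr
      · exact hbdry b ⟨hab, le_rfl⟩ hub
      · exact hbdry a ⟨le_rfl, hab⟩ (hub.trans hua)
    _ = 2 * M * u a := by ring

theorem abs_integral_dirichletKernel_le (n : ℕ) {x : ℝ} (hx : 0 < x) (hxπ : x ≤ π) :
    |∫ t in x..π, dirichletKernel n t| ≤ 2 / ((n + 1 / 2) * sin (x / 2)) := by
  set l : ℝ := n + 1 / 2
  have hl : 0 < l := by positivity
  have hsin (t : ℝ) (ht : t ∈ Set.Icc x π) : 0 < sin (t / 2) :=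
    sin_pos_of_pos_of_lt_pi (by linarith [ht.1]) (by linarith [ht.2, pi_pos])
  have hD : Set.EqOn (dirichletKernel n) (fun t => (sin (t / 2))⁻¹ * sin (l * t))
      (Set.uIcc x π) := by
    intro t ht
    rw [Set.uIcc_of_le hxπ] at ht
    simp only [l, ← dirichletKernel_mul_sin_half, mul_comm (dirichletKernel n t),
      inv_mul_cancel_left₀ (hsin t ht).ne']
  set u' : ℝ → ℝ := fun t => -(cos (t / 2) / 2) / sin (t / 2) ^ 2
  have hu (t : ℝ) (ht : t ∈ Set.Icc x π) : HasDerivAt (fun t => (sin (t / 2))⁻¹) (u' t) t := by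
    refine (((hasDerivAt_id' t).div_const 2).sin.inv (hsin t ht).ne').congr_deriv ?_
    simp only [u', one_div]
    ring
  have hu'_nonpos (t : ℝ) (ht : t ∈ Set.Icc x π) : u' t ≤ 0 := by
    have : 0 ≤ cos (t / 2) :=
      cos_nonneg_of_mem_Icc ⟨by linarith [ht.1, pi_pos], by linarith [ht.2]⟩
    simp only [u']
    exact div_nonpos_of_nonpos_of_nonneg (by linarith) (by positivity)
  have hu' : IntervalIntegrable u' volume x π := by
    refine ContinuousOn.intervalIntegrable_of_Icc hxπ
      (ContinuousOn.div (by fun_prop) (by fun_prop) fun t ht => ?_)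
    exact pow_ne_zero 2 (hsin t ht).ne'
  have hG (t : ℝ) : HasDerivAt (fun t => -cos (l * t) / l) (sin (l * t)) t := by
    refine ((((hasDerivAt_id' t).const_mul l).cos).neg.div_const l).congr_deriv ?_
    field_simp
  have hGl (t : ℝ) : |-cos (l * t) / l| ≤ 1 / l := by
    rw [abs_div, abs_neg, abs_of_pos hl]
    gcongr
    exact abs_cos_le_one _
  have hbound := abs_integral_mul_le_of_deriv_nonpos hxπ hu hu'_nonpos hu' (fun t _ => hG t)
    ((by fun_prop : Continuous fun t => sin (l * t)).intervalIntegrable x π) (fun t _ => hGl t)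
    (inv_nonneg.2 (hsin π ⟨hxπ, le_rfl⟩).le)
  rw [intervalIntegral.integral_congr hD]
  convert hbound using 1
  field_simp

theorem dirichletPrimitive_mem_Icc_of_mul_le (n : ℕ) {x : ℝ} (hx : 0 ≤ x)
    (hxn : x * (n + 1 / 2) ≤ 2) : dirichletPrimitive n x ∈ Set.Icc 0 (2 * π) := by
  have hterm (k : ℕ) (hk : k ∈ range n) :
      sin (((k : ℝ) + 1) * x) / ((k : ℝ) + 1) ∈ Set.Icc 0 x := by
    have hkn : (k : ℝ) + 1 ≤ n := by exact_mod_cast mem_range.1 hk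
    have harg : 0 ≤ ((k : ℝ) + 1) * x := by positivity
    have hargπ : ((k : ℝ) + 1) * x ≤ π := by nlinarith [pi_gt_three]
    constructor
    · exact div_nonneg (sin_nonneg_of_nonneg_of_le_pi harg hargπ) (by positivity)
    · rw [div_le_iff₀ (by positivity)]
      linarith [sin_le harg]
  have hsum_nonneg := sum_nonneg fun k hk => (hterm k hk).1
  have hsum_le : ∑ k ∈ range n, sin (((k : ℝ) + 1) * x) / ((k : ℝ) + 1) ≤ n * x := by
    simpa using sum_le_sum fun k hk => (hterm k hk).2
  simp only [dirichletPrimitive, Set.mem_Icc]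
  constructor <;> nlinarith [pi_gt_three]

theorem dirichletPrimitive_mem_Icc_of_le_mul (n : ℕ) {x : ℝ} (hxn : 2 ≤ x * (n + 1 / 2))
    (hxπ : x ≤ π) : dirichletPrimitive n x ∈ Set.Icc 0 (2 * π) := by
  have hx : 0 < x := pos_of_mul_pos_left (by linarith) (by positivity : (0 : ℝ) ≤ n + 1 / 2)
  have hjordan : x / π ≤ sin (x / 2) := by
    have := mul_le_sin (x := x / 2) (by positivity) (by linarith)
    calc x / π = 2 / π * (x / 2) := by ring
      _ ≤ sin (x / 2) := this
  have hrem : 2 / ((n + 1 / 2) * sin (x / 2)) ≤ π := by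
    rw [div_le_iff₀ (by nlinarith [pi_pos, div_pos hx pi_pos])]
    calc 2 ≤ x * (n + 1 / 2) := hxn
      _ = π * ((n + 1 / 2) * (x / π)) := by field_simp
      _ ≤ π * ((n + 1 / 2) * sin (x / 2)) := by gcongr
  have hF : dirichletPrimitive n x = π - ∫ t in x..π, dirichletKernel n t := by
    rw [integral_dirichletKernel, dirichletPrimitive_pi]
    ring
  have hint := abs_le.1 ((abs_integral_dirichletKernel_le n hx hxπ).trans hrem)
  rw [hF, Set.mem_Icc]
  constructor <;> linarith [hint.1, hint.2]

theorem dirichletPrimitive_mem_Icc_of_mem_Icc_pi (n : ℕ) {x : ℝ} (hx : x ∈ Set.Icc 0 π) :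
    dirichletPrimitive n x ∈ Set.Icc 0 (2 * π) :=
  (le_total (x * (n + 1 / 2)) 2).elim (dirichletPrimitive_mem_Icc_of_mul_le n hx.1)
    fun h => dirichletPrimitive_mem_Icc_of_le_mul n h hx.2

theorem dirichletPrimitive_mem_Icc_of_mem_Icc_two_pi (n : ℕ) {x : ℝ}
    (hx : x ∈ Set.Icc 0 (2 * π)) : dirichletPrimitive n x ∈ Set.Icc 0 (2 * π) := by
  rcases le_total x π with hxπ | hπx
  · exact dirichletPrimitive_mem_Icc_of_mem_Icc_pi n ⟨hx.1, hxπ⟩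
  · have hreflect : dirichletPrimitive n x = 2 * π - dirichletPrimitive n (2 * π - x) := by
      have := (periodic_dirichletPrimitive_sub_id n).sub_eq x
      rw [show x - 2 * π = -(2 * π - x) by ring, dirichletPrimitive_neg] at this
      linarith
    have := dirichletPrimitive_mem_Icc_of_mem_Icc_pi n (x := 2 * π - x)
      ⟨by linarith [hx.2], by linarith⟩
    rw [hreflect, Set.mem_Icc]
    constructor <;> linarith [this.1, this.2]

theorem exists_dirichletPrimitive_mem_Icc (n : ℕ) (x : ℝ) : ∃ j : ℤ,
    x - j * (2 * π) ∈ Set.Ico 0 (2 * π) ∧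
      dirichletPrimitive n x - j * (2 * π) ∈ Set.Icc 0 (2 * π) := by
  have hmem := sub_toIcoDiv_zsmul_mem_Ico two_pi_pos 0 x
  rw [zero_add, zsmul_eq_mul] at hmem
  refine ⟨_, hmem, ?_⟩
  have hper := (periodic_dirichletPrimitive_sub_id n).sub_zsmul_eq (x := x)
    (toIcoDiv two_pi_pos 0 x)
  rw [zsmul_eq_mul] at hper
  convert dirichletPrimitive_mem_Icc_of_mem_Icc_two_pi n (Set.Ico_subset_Icc_self hmem) using 1
  linarith

theorem abs_dirichletPrimitive_sub_le (n : ℕ) {α β : ℝ} (hαβ : α ≤ β) (hβα : β ≤ α + 2 * π) :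
    |dirichletPrimitive n β - dirichletPrimitive n α| ≤ 4 * π := by
  obtain ⟨i, hαi, hFi⟩ := exists_dirichletPrimitive_mem_Icc n α
  obtain ⟨j, hβj, hFj⟩ := exists_dirichletPrimitive_mem_Icc n β
  have hπ := pi_pos
  have hij : i ≤ j := by
    have : (i : ℝ) < j + 1 := by nlinarith [hαi.1, hβj.2]
    have : i < j + 1 := by exact_mod_cast this
    omega
  have hji : j ≤ i + 1 := by
    have : (j : ℝ) < i + 2 := by nlinarith [hαi.2, hβj.1]
    have : j < i + 2 := by exact_mod_cast this
    omega
  have hij' : π * i ≤ π * j := mul_le_mul_of_nonneg_left (by exact_mod_cast hij) hπ.le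
  have hji' : π * j ≤ π * (i + 1) := mul_le_mul_of_nonneg_left (by exact_mod_cast hji) hπ.le
  rw [abs_le]
  constructor <;> linarith [hFi.1, hFi.2, hFj.1, hFj.2]

theorem dirichlet_kernel_alexiewicz_bounded (n : ℕ) :
    sSup {r : ℝ | ∃ α β : ℝ, α ≤ β ∧ β ≤ α + 2 * π ∧
      r = ‖(∫ t in α..β, ∑ k ∈ Finset.Icc (-(n : ℤ)) (n : ℤ),
        Complex.exp (Complex.I * (k : ℂ) * (t : ℂ)))‖}
    ≤ 4 * π := by
  refine Real.sSup_le ?_ (by positivity)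
  rintro r ⟨α, β, hαβ, hβα, rfl⟩
  simp only [sum_Icc_exp_eq_dirichletKernel]
  rw [intervalIntegral.integral_ofReal, Complex.norm_real, Real.norm_eq_abs,
    integral_dirichletKernel]
  exact abs_dirichletPrimitive_sub_le n hαβ hβα
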